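/- Every shift-invariant Borel probability measure μ on {0,1}^ℤ with finite total entropy S(μ) = lim_{j→∞} S(π_j μ) < ∞ is purely atomic and is supported on periodic configurations; equivalently, μ is a countable convex combination of basic periodic configuration measures. -/

import Mathlib

open MeasureTheory

/-- Shannon entropy of a measure on a finite set (with `0 log 0 = 0`). -/
noncomputable def shannonEntropy {Q : Type*} [Fintype Q] (μ : Q → ℝ) : ℝ :=
  -∑ q, μ q * Real.log (μ q)

/-- The Shannon entropy of the marginal of `μ` on the coordinates `{0, ..., j}`. -/
noncomputable def marginalEntropy (μ : Measure (ℤ → Bool)) (j : ℕ) : ℝ :=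
  shannonEntropy (fun ζ : Fin (j + 1) → Bool =>
    (μ {x : ℤ → Bool | ∀ t : Fin (j + 1), x ((t : ℕ) : ℤ) = ζ t}).toReal)

/-!
A non-periodic configuration `x` cannot be an atom: by Poincaré recurrence an atom returns to
itself under some iterate of the shift. Hence, if `x` is not periodic, the masses of the
centred cylinders `{y | y i = x i for |i| ≤ n}` tend to `0`, so for every `t > 0` every
non-periodic point lies in one of the increasing sets of points whose centred `n`-cylinder has
mass at most `exp (-t)`. By shift invariance such a set has the mass of the words of length
`2n + 1` with probability at most `exp (-t)`, which is at most `S(π_{2n} μ) / t ≤ B / t`.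
Letting `t → ∞`, the non-periodic points are `μ`-null.
-/

open MeasureTheory Filter Topology Function

lemma mul_le_negMulLog_of_le_exp_neg {p t : ℝ} (hp : 0 ≤ p) (hpt : p ≤ Real.exp (-t)) :
    t * p ≤ Real.negMulLog p := by
  rcases hp.eq_or_lt with rfl | hp
  · simp
  have hlog : Real.log p ≤ -t := (Real.log_le_iff_le_exp hp).2 hpt
  rw [Real.negMulLog]
  nlinarith

lemma shannonEntropy_eq_sum_negMulLog {Q : Type*} [Fintype Q] (p : Q → ℝ) :
    shannonEntropy p = ∑ q, Real.negMulLog (p q) := by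
  simp [shannonEntropy, Real.negMulLog]

lemma mul_sum_le_shannonEntropy {Q : Type*} [Fintype Q] {p : Q → ℝ} (h0 : ∀ q, 0 ≤ p q)
    (h1 : ∀ q, p q ≤ 1) (t : ℝ) :
    t * ∑ q with p q ≤ Real.exp (-t), p q ≤ shannonEntropy p := by
  rw [shannonEntropy_eq_sum_negMulLog, Finset.mul_sum]
  calc ∑ q with p q ≤ Real.exp (-t), t * p q
      ≤ ∑ q with p q ≤ Real.exp (-t), Real.negMulLog (p q) :=
        Finset.sum_le_sum fun q hq ↦
          mul_le_negMulLog_of_le_exp_neg (h0 q) (Finset.mem_filter.1 hq).2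
    _ ≤ ∑ q, Real.negMulLog (p q) :=
        Finset.sum_le_sum_of_subset_of_nonneg (Finset.filter_subset _ _)
          fun q _ _ ↦ Real.negMulLog_nonneg (h0 q) (h1 q)

lemma mul_measureReal_le_shannonEntropy {Q : Type*} [Fintype Q] [MeasurableSpace Q]
    [MeasurableSingletonClass Q] (ν : Measure Q) [IsProbabilityMeasure ν] (t : ℝ) :
    t * ν.real {q | ν.real {q} ≤ Real.exp (-t)} ≤ shannonEntropy fun q ↦ ν.real {q} := by
  classical
  have h := mul_sum_le_shannonEntropy (p := fun q ↦ ν.real {q}) (fun _ ↦ measureReal_nonneg)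
    (fun _ ↦ measureReal_le_one) t
  simpa using h

theorem MeasureTheory.Conservative.exists_isPeriodicPt_of_measure_singleton_ne_zero
    {X : Type*} [MeasurableSpace X] [MeasurableSingletonClass X] {μ : Measure X} {f : X → X}
    (hf : Conservative f μ) {x : X} (hx : μ {x} ≠ 0) : ∃ m ≠ 0, IsPeriodicPt f m x := by
  obtain ⟨_, rfl, m, hm, hmx⟩ :=
    hf.exists_mem_iterate_mem (measurableSet_singleton x).nullMeasurableSet hx
  exact ⟨m, hm, hmx⟩

namespace FullShift

variable {α : Type*}

def shift (x : ℤ → α) : ℤ → α := fun i ↦ x (i + 1)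

lemma shift_iterate_apply (n : ℕ) (x : ℤ → α) (i : ℤ) : shift^[n] x i = x (i + n) := by
  induction n generalizing i with
  | zero => simp
  | succ n ih =>
    rw [iterate_succ_apply', shift, ih]
    push_cast
    ring_nf

def window (a : ℤ) (m : ℕ) (x : ℤ → α) : Fin (m + 1) → α := fun t ↦ x (a + t)

lemma window_comp_shift_iterate (a : ℤ) (m n : ℕ) :
    window a m ∘ shift^[n] = window (a + n) m (α := α) := by
  ext x t
  simp only [comp_apply, window, shift_iterate_apply]
  ring_nf

def centeredCylinder (n : ℕ) (x : ℤ → α) : Set (ℤ → α) :=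
  window (-n) (2 * n) ⁻¹' {window (-n) (2 * n) x}

lemma mem_centeredCylinder {n : ℕ} {x y : ℤ → α} :
    y ∈ centeredCylinder n x ↔ ∀ i : ℤ, |i| ≤ n → y i = x i := by
  simp only [centeredCylinder, Set.mem_preimage, Set.mem_singleton_iff, window, funext_iff]
  constructor
  · intro h i hi
    obtain ⟨hlo, hhi⟩ := abs_le.1 hi
    have h' := h ⟨(i + n).toNat, by omega⟩
    rwa [Fin.val_mk, Int.toNat_of_nonneg (by omega), show -(n : ℤ) + (i + n) = i by ring] at h'
  · intro h t
    exact h _ (abs_le.2 ⟨by omega, by omega⟩)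

lemma centeredCylinder_antitone (x : ℤ → α) : Antitone (centeredCylinder · x) :=
  fun _ _ hmn _ hy ↦ mem_centeredCylinder.2 fun i hi ↦
    mem_centeredCylinder.1 hy i (hi.trans (by exact_mod_cast hmn))

lemma iInter_centeredCylinder (x : ℤ → α) : ⋂ n, centeredCylinder n x = {x} := by
  ext y
  simp only [Set.mem_iInter, Set.mem_singleton_iff, mem_centeredCylinder]
  refine ⟨fun h ↦ funext fun i ↦ h i.natAbs i (by simp), ?_⟩
  rintro rfl _ _ _
  rfl

variable [MeasurableSpace α] {μ : Measure (ℤ → α)}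

lemma measurable_shift : Measurable (shift : (ℤ → α) → ℤ → α) :=
  measurable_pi_lambda _ fun i ↦ measurable_pi_apply (i + 1)

lemma measurable_window (a : ℤ) (m : ℕ) : Measurable (window a m : (ℤ → α) → _) :=
  measurable_pi_lambda _ fun _ ↦ measurable_pi_apply _

lemma measurableSet_centeredCylinder [MeasurableSingletonClass α] (n : ℕ) (x : ℤ → α) :
    MeasurableSet (centeredCylinder n x) :=
  measurable_window _ _ (measurableSet_singleton _)

lemma map_window_neg (hσ : MeasurePreserving shift μ μ) (n m : ℕ) :
    μ.map (window (-n) m) = μ.map (window 0 m) := by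
  conv_lhs => rw [← (hσ.iterate n).map_eq]
  rw [Measure.map_map (measurable_window _ _) (measurable_shift.iterate n),
    window_comp_shift_iterate, neg_add_cancel]

lemma measure_singleton_eq_zero_of_not_periodic [IsFiniteMeasure μ] [MeasurableSingletonClass α]
    (hσ : MeasurePreserving shift μ μ) {x : ℤ → α}
    (hx : ¬∃ p : ℤ, 0 < p ∧ ∀ i : ℤ, x (i + p) = x i) : μ {x} = 0 := by
  by_contra h
  obtain ⟨m, hm, hper⟩ := hσ.conservative.exists_isPeriodicPt_of_measure_singleton_ne_zero h
  exact hx ⟨m, by omega, fun i ↦ (shift_iterate_apply m x i).symm.trans (congrFun hper.eq i)⟩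

end FullShift

open FullShift

lemma marginalEntropy_eq (μ : Measure (ℤ → Bool)) (m : ℕ) :
    marginalEntropy μ m = shannonEntropy fun q ↦ (μ.map (window 0 m)).real {q} := by
  unfold marginalEntropy
  congr 1
  funext q
  rw [map_measureReal_apply (measurable_window 0 m) (measurableSet_singleton q)]
  have hcyl :
      {x : ℤ → Bool | ∀ t : Fin (m + 1), x ((t : ℕ) : ℤ) = q t} =
        window 0 m ⁻¹' {q} := by
    ext x
    simp [window, funext_iff]
  rw [hcyl]
  rfl

section ProbabilityMeasure

variable {μ : Measure (ℤ → Bool)} [IsProbabilityMeasure μ]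

lemma mul_measureReal_centeredCylinder_le (hσ : MeasurePreserving shift μ μ) (n : ℕ)
    (t : ℝ) :
    t * μ.real {x | μ.real (centeredCylinder n x) ≤ Real.exp (-t)} ≤
      marginalEntropy μ (2 * n) := by
  set ν := μ.map (window (-n) (2 * n))
  have hν : IsProbabilityMeasure ν :=
    Measure.isProbabilityMeasure_map (measurable_window _ _).aemeasurable
  have hpull : {x | μ.real (centeredCylinder n x) ≤ Real.exp (-t)} =
      window (-n) (2 * n) ⁻¹' {q | ν.real {q} ≤ Real.exp (-t)} := by
    ext x
    simp only [Set.mem_ofPred_eq, Set.mem_preimage, ν,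
      map_measureReal_apply (measurable_window _ _) (measurableSet_singleton _), centeredCylinder]
  rw [hpull, ← map_measureReal_apply (measurable_window _ _) .of_discrete, marginalEntropy_eq,
    ← map_window_neg hσ n]
  exact mul_measureReal_le_shannonEntropy ν t

lemma measure_setOf_measure_singleton_eq_zero_le (hσ : MeasurePreserving shift μ μ) {B : ℝ}
    (hB : ∀ j, marginalEntropy μ j ≤ B) {t : ℝ} (ht : 0 < t) :
    μ {x | μ {x} = 0} ≤ ENNReal.ofReal (B / t) := by
  set small : ℕ → Set (ℤ → Bool) :=
    fun n ↦ {x | μ.real (centeredCylinder n x) ≤ Real.exp (-t)}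
  have hmono : Monotone small := fun m n hmn x hx ↦
    (measureReal_mono (centeredCylinder_antitone x hmn)).trans hx
  have hcover : {x | μ {x} = 0} ⊆ ⋃ n, small n := by
    intro x (hx : μ {x} = 0)
    have hlim := tendsto_measure_iInter_atTop (μ := μ)
      (fun n ↦ (measurableSet_centeredCylinder n x).nullMeasurableSet)
      (centeredCylinder_antitone x) ⟨0, measure_ne_top μ _⟩
    rw [iInter_centeredCylinder, hx] at hlim
    obtain ⟨n, hn⟩ :=
      (hlim.eventually_lt_const (ENNReal.ofReal_pos.2 (Real.exp_pos (-t)))).exists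
    exact Set.mem_iUnion.2 ⟨n, ENNReal.toReal_le_of_le_ofReal (Real.exp_pos _).le hn.le⟩
  calc μ {x | μ {x} = 0} ≤ μ (⋃ n, small n) := measure_mono hcover
    _ = ⨆ n, μ (small n) := hmono.measure_iUnion
    _ ≤ ENNReal.ofReal (B / t) := iSup_le fun n ↦ by
      rw [← ofReal_measureReal]
      refine ENNReal.ofReal_le_ofReal ((le_div_iff₀' ht).2 ?_)
      exact (mul_measureReal_centeredCylinder_le hσ n t).trans (hB _)

lemma measure_setOf_measure_singleton_eq_zero (hσ : MeasurePreserving shift μ μ) {B : ℝ}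
    (hB : ∀ j, marginalEntropy μ j ≤ B) : μ {x | μ {x} = 0} = 0 := by
  have hlim : Tendsto (fun t : ℝ ↦ ENNReal.ofReal (B / t)) atTop (𝓝 0) := by
    simpa using ENNReal.tendsto_ofReal (tendsto_const_nhds.div_atTop tendsto_id)
  exact nonpos_iff_eq_zero.1 <| ge_of_tendsto hlim <|
    (eventually_gt_atTop 0).mono fun _ ht ↦ measure_setOf_measure_singleton_eq_zero_le hσ hB ht

end ProbabilityMeasure

/-- A shift-invariant probability measure on `{0,1}^ℤ` whose marginal entropies
`S(π_j μ)` stay bounded (i.e. the total entropy `lim_j S(π_j μ)` is finite) is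
concentrated on the (countable) set of periodic configurations; in particular it
is purely atomic, a countable convex combination of basic periodic configuration
measures. -/
theorem stmt17 (μ : Measure (ℤ → Bool)) [IsProbabilityMeasure μ]
    (hshift : Measure.map (fun x : ℤ → Bool => fun i => x (i + 1)) μ = μ)
    (hent : ∃ B : ℝ, ∀ j : ℕ, marginalEntropy μ j ≤ B) :
    μ {x : ℤ → Bool | ∃ p : ℤ, 0 < p ∧ ∀ i : ℤ, x (i + p) = x i} = 1 := by
  obtain ⟨B, hB⟩ := hent
  have hσ : MeasurePreserving shift μ μ := ⟨measurable_shift, hshift⟩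
  have hnull : μ {x : ℤ → Bool | ∃ p : ℤ, 0 < p ∧ ∀ i : ℤ, x (i + p) = x i}ᶜ = 0 :=
    measure_mono_null (fun x hx ↦ measure_singleton_eq_zero_of_not_periodic hσ hx)
      (measure_setOf_measure_singleton_eq_zero hσ hB)
  rw [measure_congr (ae_eq_univ.2 hnull), measure_univ]
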